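/- arXiv:funct-an/9506001 — 2 statements merged into one kernel-verified Lean document; each statement's English description precedes it below -/
import Mathlib

section
/- Let A(G), A(H), A(F) be digraph spaces and let α : A(G) → A(H) and β : A(H) → A(F) be compression type maps such that β ∘ α is of compression type with the same set of compression projections (in A(G)) as α. Then there exists an isometric *-homomorphism ψ from the C*-subalgebra C*(α(A(G))) generated by α(A(G)) to the C*-subalgebra C*(β(A(H))) generated by β(A(H)) such that ψ(α(a)) = β(α(a)) for every a ∈ A(G); that is, ψ ∘ i = i' ∘ β on α(A(G)), where i and i' are the inclusion maps of α(A(G)) and β(A(H)) into the respective generated C*-algebras. -/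
open Matrix

noncomputable section

/-- The operator norm of a complex matrix acting on `ℓ²`. -/
noncomputable def opNorm {ι : Type*} [Fintype ι] [DecidableEq ι] (A : Matrix ι ι ℂ) : ℝ :=
  ‖Matrix.toEuclideanCLM (𝕜 := ℂ) (n := ι) A‖

/-- The digraph space `A(G)` of a digraph `E` on the vertex set `ι`: the linear span of the
standard matrix units `e i j` for edges `(i, j)` of `E`. -/
def digraphSpace {ι : Type*} [Fintype ι] [DecidableEq ι] (E : ι → ι → Prop) :
    Submodule ℂ (Matrix ι ι ℂ) :=
  Submodule.span ℂ {A | ∃ i j, E i j ∧ A = Matrix.single i j 1}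

/-- The diagonal `C(G)`: the span of the diagonal matrix units `e i i`. -/
def diagSpace (ι : Type*) [Fintype ι] [DecidableEq ι] : Submodule ℂ (Matrix ι ι ℂ) :=
  Submodule.span ℂ {A | ∃ i, A = Matrix.single i i 1}

/-- The diagonal projection `∑_{i ∈ S} e i i` determined by a set `S` of vertices. -/
def diagProj {ι : Type*} [Fintype ι] [DecidableEq ι] (S : Finset ι) : Matrix ι ι ℂ :=
  ∑ i ∈ S, Matrix.single i i 1

/-- A regular bimodule map `φ : A(G) → A(H)` (modelled as a linear map of the ambient matrix
spaces): each matrix unit of `A(G)` is sent to an orthogonal sum of matrix units of `A(H)`,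
the diagonal is mapped into the diagonal, and `φ (c₁ a c₂) = φ c₁ * φ a * φ c₂` for
diagonal `c₁, c₂`. -/
def IsRegularBimoduleMap {ι κ : Type*} [Fintype ι] [DecidableEq ι] [Fintype κ] [DecidableEq κ]
    (E : ι → ι → Prop) (F : κ → κ → Prop)
    (φ : Matrix ι ι ℂ →ₗ[ℂ] Matrix κ κ ℂ) : Prop :=
  (∀ i j, E i j → ∃ U : Finset (κ × κ),
      (∀ p ∈ U, F p.1 p.2) ∧
      (∀ p ∈ U, ∀ q ∈ U, p ≠ q → p.1 ≠ q.1 ∧ p.2 ≠ q.2) ∧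
      φ (Matrix.single i j 1) = ∑ p ∈ U, Matrix.single p.1 p.2 1) ∧
  (∀ c ∈ diagSpace ι, φ c ∈ diagSpace κ) ∧
  (∀ c₁ ∈ diagSpace ι, ∀ c₂ ∈ diagSpace ι, ∀ a ∈ digraphSpace E,
      φ (c₁ * a * c₂) = φ c₁ * φ a * φ c₂)

/-- A diagonal projection `Q = diagProj S` is `A(G)`-irreducible if the C*-algebra (equivalently,
in finite dimensions, the non-unital star subalgebra) generated by `Q A(G) Q` is all of
`Q M_n Q`. -/
def IsIrreducibleProj {ι : Type*} [Fintype ι] [DecidableEq ι] (E : ι → ι → Prop)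
    (S : Finset ι) : Prop :=
  (NonUnitalStarAlgebra.adjoin ℂ
      ((fun a => diagProj S * a * diagProj S) '' (digraphSpace E : Set (Matrix ι ι ℂ))) :
    Set (Matrix ι ι ℂ)) =
  (fun x => diagProj S * x * diagProj S) '' Set.univ

/-- An elementary compression type map `γ : A(G) → A(H)` associated with the pair of diagonal
projections determined by `S` (an `A(G)`-irreducible set of vertices of `G`) and `T` (a set of
vertices of `H` of the same cardinality): on `A(G)`, `γ` is the compression `a ↦ Q a Q` followed
by an injective star homomorphism carrying matrix units to matrix units, i.e. there is a
bijection `θ : S → T` with `γ a = ∑_{i, j ∈ S} a i j • e (θ i) (θ j)` for `a ∈ A(G)`;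
moreover `γ` maps `A(G)` into `A(H)`. -/
def IsElemCompression {ι κ : Type*} [Fintype ι] [DecidableEq ι] [Fintype κ] [DecidableEq κ]
    (E : ι → ι → Prop) (F : κ → κ → Prop)
    (γ : Matrix ι ι ℂ →ₗ[ℂ] Matrix κ κ ℂ) (S : Finset ι) (T : Finset κ) : Prop :=
  IsIrreducibleProj E S ∧
  (∀ a ∈ digraphSpace E, γ a ∈ digraphSpace F) ∧
  ∃ θ : ι → κ, Set.InjOn θ ↑S ∧ (∀ i ∈ S, θ i ∈ T) ∧ (∀ k ∈ T, ∃ i ∈ S, θ i = k) ∧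
    ∀ a ∈ digraphSpace E,
      γ a = ∑ i ∈ S, ∑ j ∈ S, a i j • Matrix.single (θ i) (θ j) (1 : ℂ)

/-- `φ : A(G) → A(H)` is of compression type, with set of compression projections `𝒬`:
it is a direct sum of elementary compression type maps with mutually orthogonal range
projections, whose compression projections form the set `𝒬`. -/
def IsCompressionTypeWithProjs {ι κ : Type*} [Fintype ι] [DecidableEq ι] [Fintype κ]
    [DecidableEq κ] (E : ι → ι → Prop) (F : κ → κ → Prop)
    (φ : Matrix ι ι ℂ →ₗ[ℂ] Matrix κ κ ℂ) (𝒬 : Set (Finset ι)) : Prop :=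
  ∃ (t : ℕ) (γ : Fin t → (Matrix ι ι ℂ →ₗ[ℂ] Matrix κ κ ℂ))
      (S : Fin t → Finset ι) (T : Fin t → Finset κ),
    (∀ i, IsElemCompression E F (γ i) (S i) (T i)) ∧
    (∀ i j, i ≠ j → Disjoint (T i) (T j)) ∧
    (∀ a ∈ digraphSpace E, φ a = ∑ i, γ i a) ∧
    Set.range S = 𝒬

/-- `φ : A(G) → A(H)` is of compression type: a direct sum of elementary compression type maps
with mutually orthogonal range projections. -/
def IsCompressionType {ι κ : Type*} [Fintype ι] [DecidableEq ι] [Fintype κ] [DecidableEq κ]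
    (E : ι → ι → Prop) (F : κ → κ → Prop)
    (φ : Matrix ι ι ℂ →ₗ[ℂ] Matrix κ κ ℂ) : Prop :=
  ∃ 𝒬, IsCompressionTypeWithProjs E F φ 𝒬

end

namespace TelescopeAux

set_option linter.unusedSectionVars false

variable {κ : Type*} [Fintype κ] [DecidableEq κ]

lemma ee_mul (a b c' d : κ) (c e : ℂ) :
    single a b c * single c' d e =
      if b = c' then single a d (c * e) else 0 := by
  split_ifs with h
  · subst h; exact single_mul_single_same c a b d e
  · exact single_mul_single_of_ne c a b c' h e

lemma star_e (a b : κ) (c : ℂ) :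
    star (single a b c) = single b a (star c) := by
  ext i j
  simp only [Matrix.star_apply, single, of_apply]
  by_cases h1 : b = i <;> by_cases h2 : a = j <;> simp [h1, h2, and_comm]

lemma e_sum {γ : Type*} (s : Finset γ) (i j : κ) (g : γ → ℂ) :
    ∑ q ∈ s, single i j (g q) = single i j (∑ q ∈ s, g q) := by
  ext a b
  simp only [Matrix.sum_apply, single, of_apply]
  split_ifs <;> simp

variable {σ : Type*} [Fintype σ] [DecidableEq σ]

/-- `Th f x = ∑ p q, e_{f p, f q} (x p q)`. -/
noncomputable def Th (f : σ → κ) (x : Matrix σ σ ℂ) : Matrix κ κ ℂ :=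
  ∑ p, ∑ q, single (f p) (f q) (x p q)

lemma Th_add (f : σ → κ) (x y : Matrix σ σ ℂ) : Th f (x + y) = Th f x + Th f y := by
  simp [Th, Matrix.add_apply, single_add, Finset.sum_add_distrib]

lemma Th_smul (f : σ → κ) (c : ℂ) (x : Matrix σ σ ℂ) : Th f (c • x) = c • Th f x := by
  simp [Th, Matrix.smul_apply, smul_single, Finset.smul_sum]

lemma Th_zero (f : σ → κ) : Th f 0 = 0 := by simp [Th]

lemma Th_star (f : σ → κ) (x : Matrix σ σ ℂ) : star (Th f x) = Th f (star x) := by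
  calc star (Th f x)
      = ∑ p, ∑ q, single (f q) (f p) (star (x p q)) := by
        simp [Th, star_sum, star_e]
    _ = ∑ q, ∑ p, single (f q) (f p) (star (x p q)) := Finset.sum_comm
    _ = Th f (star x) := by simp [Th, Matrix.star_apply]

lemma Th_mul_expand {τ : Type*} [Fintype τ] (f : σ → κ) (g : τ → κ)
    (x : Matrix σ σ ℂ) (y : Matrix τ τ ℂ) :
    Th f x * Th g y = ∑ p, ∑ q, ∑ p', ∑ q',
      (single (f p) (f q) (x p q) * single (g p') (g q') (y p' q')) := by
  rw [Th, Th, Finset.sum_mul]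
  refine Finset.sum_congr rfl fun p _ => ?_
  rw [Finset.sum_mul]
  refine Finset.sum_congr rfl fun q _ => ?_
  rw [Finset.mul_sum]
  refine Finset.sum_congr rfl fun p' _ => ?_
  rw [Finset.mul_sum]

lemma Th_mul (f : σ → κ) (hf : Function.Injective f) (x y : Matrix σ σ ℂ) :
    Th f x * Th f y = Th f (x * y) := by
  have step1 : ∑ p, ∑ q, ∑ p', ∑ q',
        (single (f p) (f q) (x p q) * single (f p') (f q') (y p' q'))
      = ∑ p, ∑ q, ∑ q', single (f p) (f q') (x p q * y q q') := by
    refine Finset.sum_congr rfl fun p _ => Finset.sum_congr rfl fun q _ => ?_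
    have h1 : ∀ p' q', single (f p) (f q) (x p q) * single (f p') (f q') (y p' q')
        = if q = p' then single (f p) (f q') (x p q * y p' q') else 0 := by
      intro p' q'
      rw [ee_mul]
      by_cases h : q = p'
      · simp [h]
      · rw [if_neg (fun hc => h (hf hc)), if_neg h]
    simp only [h1]
    rw [Finset.sum_comm]
    simp only [Finset.sum_ite_eq, Finset.mem_univ, if_true]
  have step2 : ∑ p, ∑ q, ∑ q', single (f p) (f q') (x p q * y q q')
      = Th f (x * y) := by
    rw [Th]
    refine Finset.sum_congr rfl fun p _ => ?_
    rw [Finset.sum_comm]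
    refine Finset.sum_congr rfl fun q' _ => ?_
    rw [e_sum, ← Matrix.mul_apply]
  rw [Th_mul_expand, step1, step2]

lemma Th_mul_disjoint {τ : Type*} [Fintype τ] (f : σ → κ) (g : τ → κ)
    (h : ∀ p q, f p ≠ g q) (x : Matrix σ σ ℂ) (y : Matrix τ τ ℂ) :
    Th f x * Th g y = 0 := by
  rw [Th_mul_expand]
  have : ∀ (p q : σ) (p' q' : τ),
      single (f p) (f q) (x p q) * single (g p') (g q') (y p' q') = 0 :=
    fun p q p' q' => single_mul_single_of_ne _ _ _ _ (h q p') _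
  simp [this]

lemma Th_apply (f : σ → κ) (hf : Function.Injective f) (x : Matrix σ σ ℂ) (p q : σ) :
    Th f x (f p) (f q) = x p q := by
  rw [Th]
  simp only [Matrix.sum_apply]
  have h1 : ∀ p' q', single (f p') (f q') (x p' q') (f p) (f q)
      = if p' = p then (if q' = q then x p' q' else 0) else 0 := by
    intro p' q'
    by_cases h1 : p' = p <;> by_cases h2 : q' = q
    · subst h1; subst h2; simp [single]
    · subst h1; simp [single, hf.ne h2, h2]
    · subst h2; simp [single, hf.ne h1, h1]
    · simp [single, hf.ne h1, hf.ne h2, h1, h2]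
  simp only [h1]
  have h2 : ∀ p', (∑ q', if p' = p then (if q' = q then x p' q' else 0) else 0)
      = if p' = p then x p' q else 0 := by
    intro p'
    by_cases h : p' = p <;> simp [h]
  simp only [h2]
  simp

lemma Th_apply_zero (f : σ → κ) (a b : κ) (ha : ∀ p, f p ≠ a) (x : Matrix σ σ ℂ) :
    Th f x a b = 0 := by
  rw [Th]
  simp only [Matrix.sum_apply]
  have : ∀ p' q', single (f p') (f q') (x p' q') a b = 0 := by
    intro p' q'
    simp [single, ha p']
  simp [this]


section Lam

variable {ι : Type*} [Fintype ι] [DecidableEq ι]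

/-- The auxiliary product algebra `∏_{Q ∈ 𝒬} M_{|Q|}`. -/
abbrev DAlg (𝒬 : Set (Finset ι)) : Type _ :=
  ∀ Q : 𝒬, Matrix {x // x ∈ (Q : Finset ι)} {x // x ∈ (Q : Finset ι)} ℂ

/-- The simultaneous compression map. -/
def cMap (𝒬 : Set (Finset ι)) (a : Matrix ι ι ℂ) : DAlg 𝒬 :=
  fun Q => Matrix.of fun p q => a ↑p ↑q

variable {𝒬 : Set (Finset ι)} {t : ℕ} {S : Fin t → Finset ι} {T : Fin t → Finset κ}

/-- The amalgamation of the matrix-unit transfer maps. -/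
noncomputable def Lam (hS : ∀ i, S i ∈ 𝒬) (θ : Fin t → ι → κ) (x : DAlg 𝒬) :
    Matrix κ κ ℂ :=
  ∑ i, Th (fun p : {y // y ∈ S i} => θ i ↑p) (x ⟨S i, hS i⟩)

lemma finj {θ : Fin t → ι → κ} (hinj : ∀ i, Set.InjOn (θ i) ↑(S i)) (i : Fin t) :
    Function.Injective (fun p : {y // y ∈ S i} => θ i ↑p) :=
  fun p q h => Subtype.ext (hinj i p.2 q.2 h)

lemma fdisj {θ : Fin t → ι → κ} (hT : ∀ i, ∀ p ∈ S i, θ i p ∈ T i)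
    (hdisj : ∀ i j, i ≠ j → Disjoint (T i) (T j))
    {i j : Fin t} (hij : i ≠ j) (p : {y // y ∈ S i}) (q : {y // y ∈ S j}) :
    θ i ↑p ≠ θ j ↑q := fun hc =>
  Finset.disjoint_left.mp (hdisj i j hij) (hT i ↑p p.2) (hc ▸ (hT j ↑q q.2))

lemma Lam_mul (hS : ∀ i, S i ∈ 𝒬) {θ : Fin t → ι → κ}
    (hinj : ∀ i, Set.InjOn (θ i) ↑(S i)) (hT : ∀ i, ∀ p ∈ S i, θ i p ∈ T i)
    (hdisj : ∀ i j, i ≠ j → Disjoint (T i) (T j)) (x y : DAlg 𝒬) :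
    Lam hS θ (x * y) = Lam hS θ x * Lam hS θ y := by
  rw [Lam, Lam, Lam, Finset.sum_mul_sum]
  refine Finset.sum_congr rfl fun i _ => ?_
  rw [Finset.sum_eq_single i]
  · rw [Th_mul _ (finj hinj i)]; rfl
  · intro j _ hji
    exact Th_mul_disjoint _ _ (fun p q => fdisj hT hdisj hji.symm p q) _ _
  · intro h; exact absurd (Finset.mem_univ i) h

lemma Lam_add (hS : ∀ i, S i ∈ 𝒬) (θ : Fin t → ι → κ) (x y : DAlg 𝒬) :
    Lam hS θ (x + y) = Lam hS θ x + Lam hS θ y := by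
  simp only [Lam, ← Finset.sum_add_distrib]
  exact Finset.sum_congr rfl fun i _ => Th_add _ _ _

lemma Lam_smul (hS : ∀ i, S i ∈ 𝒬) (θ : Fin t → ι → κ) (c : ℂ) (x : DAlg 𝒬) :
    Lam hS θ (c • x) = c • Lam hS θ x := by
  simp only [Lam, Finset.smul_sum]
  exact Finset.sum_congr rfl fun i _ => Th_smul _ _ _

lemma Lam_star (hS : ∀ i, S i ∈ 𝒬) (θ : Fin t → ι → κ) (x : DAlg 𝒬) :
    Lam hS θ (star x) = star (Lam hS θ x) := by
  simp only [Lam, star_sum]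
  exact Finset.sum_congr rfl fun i _ => (Th_star _ _).symm

lemma Lam_apply (hS : ∀ i, S i ∈ 𝒬) {θ : Fin t → ι → κ}
    (hinj : ∀ i, Set.InjOn (θ i) ↑(S i)) (hT : ∀ i, ∀ p ∈ S i, θ i p ∈ T i)
    (hdisj : ∀ i j, i ≠ j → Disjoint (T i) (T j)) (x : DAlg 𝒬) (i : Fin t)
    (p q : {y // y ∈ S i}) :
    Lam hS θ x (θ i ↑p) (θ i ↑q) = x ⟨S i, hS i⟩ p q := by
  rw [Lam]
  simp only [Matrix.sum_apply]
  rw [Finset.sum_eq_single i]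
  · exact Th_apply _ (finj hinj i) _ p q
  · intro j _ hji
    exact Th_apply_zero _ _ _ (fun p' => fdisj hT hdisj hji p' p) _
  · intro h; exact absurd (Finset.mem_univ i) h

lemma Lam_injective (hS : ∀ i, S i ∈ 𝒬) {θ : Fin t → ι → κ}
    (hinj : ∀ i, Set.InjOn (θ i) ↑(S i)) (hT : ∀ i, ∀ p ∈ S i, θ i p ∈ T i)
    (hdisj : ∀ i j, i ≠ j → Disjoint (T i) (T j)) (hsurj : 𝒬 ⊆ Set.range S) :
    Function.Injective (Lam hS θ : DAlg 𝒬 → Matrix κ κ ℂ) := by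
  intro x y hxy
  have key : ∀ i : Fin t, x ⟨S i, hS i⟩ = y ⟨S i, hS i⟩ := by
    intro i
    ext p q
    rw [← Lam_apply hS hinj hT hdisj x i p q, ← Lam_apply hS hinj hT hdisj y i p q, hxy]
  funext Q
  obtain ⟨i, hi⟩ := hsurj Q.2
  have hQ : Q = ⟨S i, hS i⟩ := Subtype.ext hi.symm
  rw [hQ]
  exact key i

lemma Th_restrict (s : Finset ι) (θ : ι → κ) (a : Matrix ι ι ℂ) :
    Th (fun p : {y // y ∈ s} => θ ↑p) (Matrix.of fun p q : {y // y ∈ s} => a ↑p ↑q)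
      = ∑ p ∈ s, ∑ q ∈ s, a p q • single (θ p) (θ q) (1 : ℂ) := by
  rw [Th, ← Finset.sum_coe_sort s (fun p => ∑ q ∈ s, a p q • single (θ p) (θ q) (1:ℂ))]
  refine Finset.sum_congr rfl fun p _ => ?_
  rw [← Finset.sum_coe_sort s (fun q => a ↑p q • single (θ ↑p) (θ q) (1:ℂ))]
  refine Finset.sum_congr rfl fun q _ => ?_
  simp [smul_single]

/-- `Lam` as a non-unital star algebra homomorphism. -/
noncomputable def LamHom (hS : ∀ i, S i ∈ 𝒬) {θ : Fin t → ι → κ}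
    (hinj : ∀ i, Set.InjOn (θ i) ↑(S i)) (hT : ∀ i, ∀ p ∈ S i, θ i p ∈ T i)
    (hdisj : ∀ i j, i ≠ j → Disjoint (T i) (T j)) :
    DAlg 𝒬 →⋆ₙₐ[ℂ] Matrix κ κ ℂ where
  toFun := Lam hS θ
  map_smul' := Lam_smul hS θ
  map_zero' := by simpa using Lam_smul hS θ 0 0
  map_add' := Lam_add hS θ
  map_mul' := Lam_mul hS hinj hT hdisj
  map_star' := Lam_star hS θ

@[simp] lemma LamHom_apply (hS : ∀ i, S i ∈ 𝒬) {θ : Fin t → ι → κ}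
    (hinj : ∀ i, Set.InjOn (θ i) ↑(S i)) (hT : ∀ i, ∀ p ∈ S i, θ i p ∈ T i)
    (hdisj : ∀ i j, i ≠ j → Disjoint (T i) (T j)) (x : DAlg 𝒬) :
    LamHom hS hinj hT hdisj x = Lam hS θ x := rfl

end Lam

section NormLemma

set_option maxHeartbeats 1000000 in
set_option synthInstance.maxHeartbeats 100000 in
/-- An injective star homomorphism out of a star subalgebra of a matrix algebra is isometric. -/
lemma opNorm_map_of_injective {ι κ : Type*} [Fintype ι] [DecidableEq ι] [Fintype κ]
    [DecidableEq κ] (A : NonUnitalStarSubalgebra ℂ (Matrix ι ι ℂ))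
    (χ : A →⋆ₙₐ[ℂ] Matrix κ κ ℂ) (hχ : Function.Injective χ) (x : A) :
    opNorm (χ x) = opNorm (x : Matrix ι ι ℂ) := by
  classical
  let u : Matrix ι ι ℂ →⋆ₙₐ[ℂ] (EuclideanSpace ℂ ι →L[ℂ] EuclideanSpace ℂ ι) :=
    NonUnitalStarAlgHomClass.toNonUnitalStarAlgHom (Matrix.toEuclideanCLM (𝕜 := ℂ) (n := ι))
  let v : Matrix κ κ ℂ →⋆ₙₐ[ℂ] (EuclideanSpace ℂ κ →L[ℂ] EuclideanSpace ℂ κ) :=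
    NonUnitalStarAlgHomClass.toNonUnitalStarAlgHom (Matrix.toEuclideanCLM (𝕜 := ℂ) (n := κ))
  have hu : Function.Injective u := (Matrix.toEuclideanCLM (𝕜 := ℂ) (n := ι)).injective
  have hv : Function.Injective v := (Matrix.toEuclideanCLM (𝕜 := ℂ) (n := κ)).injective
  let A' := A.map u
  haveI : IsClosed (A' : Set (EuclideanSpace ℂ ι →L[ℂ] EuclideanSpace ℂ ι)) :=
    A'.toSubmodule.closed_of_finiteDimensional
  have hmem : ∀ y : A, u ↑y ∈ A' := fun y =>
    NonUnitalStarSubalgebra.mem_map.mpr ⟨↑y, y.2, rfl⟩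
  let g : A →⋆ₙₐ[ℂ] A' :=
    NonUnitalStarAlgHom.codRestrict
      (u.comp (NonUnitalStarSubalgebraClass.subtype A)) A' hmem
  have hg : Function.Bijective g := by
    constructor
    · refine (NonUnitalStarAlgHom.injective_codRestrict _ _ _).mpr ?_
      exact fun a b hab => Subtype.ext (hu hab)
    · rintro ⟨z, hz⟩
      obtain ⟨w, hw, rfl⟩ := NonUnitalStarSubalgebra.mem_map.mp hz
      exact ⟨⟨w, hw⟩, rfl⟩
  let e : A ≃⋆ₐ[ℂ] A' := StarAlgEquiv.ofBijective g hg
  let φ : A' →⋆ₙₐ[ℂ] (EuclideanSpace ℂ κ →L[ℂ] EuclideanSpace ℂ κ) :=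
    (v.comp χ).comp (NonUnitalStarAlgHomClass.toNonUnitalStarAlgHom e.symm)
  have hφ : Function.Injective φ := by
    intro a b hab
    exact e.symm.injective (hχ (hv hab))
  have key := NonUnitalStarAlgHom.norm_map φ hφ (e x)
  have h1 : φ (e x) = v (χ x) := by
    simp only [φ, NonUnitalStarAlgHom.comp_apply]
    congr 2
    exact e.symm_apply_apply x
  have h2 : ((e x : A') : EuclideanSpace ℂ ι →L[ℂ] EuclideanSpace ℂ ι) = u ↑x := rfl
  rw [h1] at key
  calc opNorm (χ x) = ‖v (χ x)‖ := rfl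
    _ = ‖e x‖ := key
    _ = ‖u (↑x : Matrix ι ι ℂ)‖ := by rw [← h2]; rfl
    _ = opNorm (x : Matrix ι ι ℂ) := rfl

end NormLemma

end TelescopeAux

set_option maxHeartbeats 2000000 in
set_option synthInstance.maxHeartbeats 400000 in
/-- Theorem 10: If `α : A(G) → A(H)` and `β : A(H) → A(F)` are compression type
maps such that `β ∘ α` is of compression type with the same set of compression projections as
`α`, then there is an isometric *-homomorphism `ψ : C*(α(A(G))) → C*(β(A(H)))` with
`ψ(α a) = β(α a)` for all `a ∈ A(G)`. -/
theorem exists_isometric_starHom_of_telescoped (n m r : ℕ)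
    (E : Fin n → Fin n → Prop) (F : Fin m → Fin m → Prop) (D : Fin r → Fin r → Prop)
    (hE : Reflexive E) (hF : Reflexive F) (hD : Reflexive D)
    (α : Matrix (Fin n) (Fin n) ℂ →ₗ[ℂ] Matrix (Fin m) (Fin m) ℂ)
    (β : Matrix (Fin m) (Fin m) ℂ →ₗ[ℂ] Matrix (Fin r) (Fin r) ℂ)
    (𝒬 : Set (Finset (Fin n)))
    (hα : IsCompressionTypeWithProjs E F α 𝒬)
    (hβ : IsCompressionType F D β)
    (hβα : IsCompressionTypeWithProjs E D (β.comp α) 𝒬) :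
    ∃ ψ : (NonUnitalStarAlgebra.adjoin ℂ
            (⇑α '' (digraphSpace E : Set (Matrix (Fin n) (Fin n) ℂ)))) →⋆ₙₐ[ℂ]
          (NonUnitalStarAlgebra.adjoin ℂ
            (⇑β '' (digraphSpace F : Set (Matrix (Fin m) (Fin m) ℂ)))),
      (∀ x, opNorm ((ψ x : Matrix (Fin r) (Fin r) ℂ)) =
          opNorm ((x : Matrix (Fin m) (Fin m) ℂ))) ∧
      (∀ x : (NonUnitalStarAlgebra.adjoin ℂ
            (⇑α '' (digraphSpace E : Set (Matrix (Fin n) (Fin n) ℂ)))),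
        (x : Matrix (Fin m) (Fin m) ℂ) ∈
            ⇑α '' (digraphSpace E : Set (Matrix (Fin n) (Fin n) ℂ)) →
          (ψ x : Matrix (Fin r) (Fin r) ℂ) = β (x : Matrix (Fin m) (Fin m) ℂ)) := by
  classical
  obtain ⟨t₁, γ₁, S₁, T₁, hElem₁, hdisj₁, hsum₁, hrange₁⟩ := hα
  obtain ⟨t₂, γ₂, S₂, T₂, hElem₂, hdisj₂, hsum₂, hrange₂⟩ := hβα
  have hch₁ := fun i => (hElem₁ i).2.2
  choose θ₁ hθ₁ using hch₁
  have hch₂ := fun i => (hElem₂ i).2.2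
  choose θ₂ hθ₂ using hch₂
  have hS₁ : ∀ i, S₁ i ∈ 𝒬 := fun i => hrange₁ ▸ Set.mem_range_self i
  have hS₂ : ∀ i, S₂ i ∈ 𝒬 := fun i => hrange₂ ▸ Set.mem_range_self i
  have hQ₁ : 𝒬 ⊆ Set.range S₁ := le_of_eq hrange₁.symm
  have hQ₂ : 𝒬 ⊆ Set.range S₂ := le_of_eq hrange₂.symm
  set AG : Set (Matrix (Fin n) (Fin n) ℂ) := (digraphSpace E : Set (Matrix (Fin n) (Fin n) ℂ))
    with hAG
  set FH : Set (Matrix (Fin m) (Fin m) ℂ) := (digraphSpace F : Set (Matrix (Fin m) (Fin m) ℂ))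
    with hFH
  let Λ₁ : TelescopeAux.DAlg 𝒬 →⋆ₙₐ[ℂ] Matrix (Fin m) (Fin m) ℂ :=
    TelescopeAux.LamHom hS₁ (fun i => (hθ₁ i).1) (fun i => (hθ₁ i).2.1) hdisj₁
  let Λ₂ : TelescopeAux.DAlg 𝒬 →⋆ₙₐ[ℂ] Matrix (Fin r) (Fin r) ℂ :=
    TelescopeAux.LamHom hS₂ (fun i => (hθ₂ i).1) (fun i => (hθ₂ i).2.1) hdisj₂
  have hΛ₁ : ∀ a ∈ digraphSpace E, Λ₁ (TelescopeAux.cMap 𝒬 a) = α a := by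
    intro a ha
    rw [hsum₁ a ha]
    show TelescopeAux.Lam hS₁ θ₁ (TelescopeAux.cMap 𝒬 a) = _
    rw [TelescopeAux.Lam]
    refine Finset.sum_congr rfl fun i _ => ?_
    rw [(hθ₁ i).2.2.2 a ha]
    exact TelescopeAux.Th_restrict (S₁ i) (θ₁ i) a
  have hΛ₂ : ∀ a ∈ digraphSpace E, Λ₂ (TelescopeAux.cMap 𝒬 a) = β (α a) := by
    intro a ha
    have := hsum₂ a ha
    rw [LinearMap.comp_apply] at this
    rw [this]
    show TelescopeAux.Lam hS₂ θ₂ (TelescopeAux.cMap 𝒬 a) = _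
    rw [TelescopeAux.Lam]
    refine Finset.sum_congr rfl fun i _ => ?_
    rw [(hθ₂ i).2.2.2 a ha]
    exact TelescopeAux.Th_restrict (S₂ i) (θ₂ i) a
  have hαF : ∀ a ∈ digraphSpace E, α a ∈ digraphSpace F := by
    intro a ha
    rw [hsum₁ a ha]
    exact Submodule.sum_mem _ fun i _ => (hElem₁ i).2.1 a ha
  set A₀ : NonUnitalStarSubalgebra ℂ (TelescopeAux.DAlg 𝒬) :=
    NonUnitalStarAlgebra.adjoin ℂ (TelescopeAux.cMap 𝒬 '' AG) with hA₀
  have hΛ₁inj : Function.Injective Λ₁ :=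
    TelescopeAux.Lam_injective hS₁ (fun i => (hθ₁ i).1) (fun i => (hθ₁ i).2.1) hdisj₁ hQ₁
  have hΛ₂inj : Function.Injective Λ₂ :=
    TelescopeAux.Lam_injective hS₂ (fun i => (hθ₂ i).1) (fun i => (hθ₂ i).2.1) hdisj₂ hQ₂
  have hA : NonUnitalStarAlgebra.adjoin ℂ (⇑α '' AG) = A₀.map Λ₁ := by
    rw [hA₀, NonUnitalStarAlgHom.map_adjoin]
    congr 1
    rw [Set.image_image]
    exact (Set.image_congr fun a ha => hΛ₁ a ha).symm
  have hmem₁ : ∀ y : A₀, Λ₁ ↑y ∈ NonUnitalStarAlgebra.adjoin ℂ (⇑α '' AG) := by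
    intro y
    rw [hA]
    exact NonUnitalStarSubalgebra.mem_map.mpr ⟨↑y, y.2, rfl⟩
  let g₁ : A₀ →⋆ₙₐ[ℂ] (NonUnitalStarAlgebra.adjoin ℂ (⇑α '' AG)) :=
    NonUnitalStarAlgHom.codRestrict
      (Λ₁.comp (NonUnitalStarSubalgebraClass.subtype A₀)) _ hmem₁
  have hg₁ : Function.Bijective g₁ := by
    constructor
    · refine (NonUnitalStarAlgHom.injective_codRestrict _ _ _).mpr ?_
      exact hΛ₁inj.comp Subtype.coe_injective
    · rintro ⟨z, hz⟩
      rw [hA] at hz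
      obtain ⟨w, hw, rfl⟩ := NonUnitalStarSubalgebra.mem_map.mp hz
      exact ⟨⟨w, hw⟩, rfl⟩
  let e : A₀ ≃⋆ₐ[ℂ] (NonUnitalStarAlgebra.adjoin ℂ (⇑α '' AG)) :=
    StarAlgEquiv.ofBijective g₁ hg₁
  have hmem₂ : ∀ y : A₀, Λ₂ ↑y ∈ NonUnitalStarAlgebra.adjoin ℂ (⇑β '' FH) := by
    have hle : A₀.map Λ₂ ≤ NonUnitalStarAlgebra.adjoin ℂ (⇑β '' FH) := by
      rw [hA₀, NonUnitalStarAlgHom.map_adjoin]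
      apply NonUnitalStarAlgebra.adjoin_le
      rintro z ⟨w, ⟨a, ha, rfl⟩, rfl⟩
      rw [hΛ₂ a ha]
      exact NonUnitalStarAlgebra.subset_adjoin ℂ _ ⟨α a, hαF a ha, rfl⟩
    exact fun y => hle (NonUnitalStarSubalgebra.mem_map.mpr ⟨↑y, y.2, rfl⟩)
  let g₂ : A₀ →⋆ₙₐ[ℂ] (NonUnitalStarAlgebra.adjoin ℂ (⇑β '' FH)) :=
    NonUnitalStarAlgHom.codRestrict
      (Λ₂.comp (NonUnitalStarSubalgebraClass.subtype A₀)) _ hmem₂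
  have hg₂ : Function.Injective g₂ := by
    refine (NonUnitalStarAlgHom.injective_codRestrict _ _ _).mpr ?_
    exact hΛ₂inj.comp Subtype.coe_injective
  refine ⟨g₂.comp (NonUnitalStarAlgHomClass.toNonUnitalStarAlgHom e.symm), ?_, ?_⟩
  · -- isometry
    intro x
    have hψinj : Function.Injective
        (g₂.comp (NonUnitalStarAlgHomClass.toNonUnitalStarAlgHom e.symm)) := by
      intro a b hab
      exact e.symm.injective (hg₂ hab)
    let χ : (NonUnitalStarAlgebra.adjoin ℂ (⇑α '' AG)) →⋆ₙₐ[ℂ] Matrix (Fin r) (Fin r) ℂ :=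
      (NonUnitalStarSubalgebraClass.subtype _).comp
        (g₂.comp (NonUnitalStarAlgHomClass.toNonUnitalStarAlgHom e.symm))
    have hχ : Function.Injective χ := by
      intro a b hab
      exact hψinj (Subtype.ext hab)
    exact TelescopeAux.opNorm_map_of_injective _ χ hχ x
  · -- compatibility with β
    rintro x ⟨a, ha, hax⟩
    have hy₀ : TelescopeAux.cMap 𝒬 a ∈ A₀ :=
      NonUnitalStarAlgebra.subset_adjoin ℂ _ ⟨a, ha, rfl⟩
    set y₀ : A₀ := ⟨TelescopeAux.cMap 𝒬 a, hy₀⟩ with hy₀def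
    have he : e y₀ = x := by
      apply Subtype.ext
      have h1 : ((e y₀ : NonUnitalStarAlgebra.adjoin ℂ (⇑α '' AG)) :
          Matrix (Fin m) (Fin m) ℂ) = Λ₁ (TelescopeAux.cMap 𝒬 a) := rfl
      rw [h1, hΛ₁ a ha]
      exact hax
    have hsymm : e.symm x = y₀ := by rw [← he, StarAlgEquiv.symm_apply_apply]
    have h2 : ((g₂.comp (NonUnitalStarAlgHomClass.toNonUnitalStarAlgHom e.symm)) x :
        Matrix (Fin r) (Fin r) ℂ) = Λ₂ ((e.symm x : A₀) : TelescopeAux.DAlg 𝒬) := rfl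
    rw [h2, hsymm]
    have h3 : ((y₀ : A₀) : TelescopeAux.DAlg 𝒬) = TelescopeAux.cMap 𝒬 a := rfl
    rw [h3, hΛ₂ a ha, hax]
end

section
/- Let A(G) ⊆ M_n be a digraph space and let Q be a diagonal projection in A(G) (a sum of distinct matrix units e_{ii}). Then there exist pairwise orthogonal A(G)-irreducible diagonal projections Q_1, …, Q_s with Q = Q_1 + ⋯ + Q_s such that Q a Q = Q_1 a Q_1 + ⋯ + Q_s a Q_s for every a ∈ A(G). -/
open Matrix

section AuxLemmas

variable {ι : Type*} [Fintype ι] [DecidableEq ι]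

lemma diagProj_eq_diagonal (S : Finset ι) :
    diagProj S = Matrix.diagonal (fun i => if i ∈ S then (1:ℂ) else 0) := by
  ext p q
  simp only [diagProj, Matrix.sum_apply, Matrix.single, Matrix.of_apply,
    Matrix.diagonal, Matrix.of_apply]
  by_cases hpq : p = q
  · subst hpq; simp
  · rw [if_neg hpq, Finset.sum_eq_zero]
    intro i hi
    rw [if_neg]
    rintro ⟨rfl, rfl⟩
    exact hpq rfl

lemma compress_apply (S : Finset ι) (A : Matrix ι ι ℂ) (p q : ι) :
    (diagProj S * A * diagProj S) p q
      = (if p ∈ S then (1:ℂ) else 0) * A p q * (if q ∈ S then (1:ℂ) else 0) := by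
  rw [diagProj_eq_diagonal, Matrix.mul_diagonal, Matrix.diagonal_mul]

lemma compress_stdBasis (S : Finset ι) (i j : ι) (c : ℂ) :
    diagProj S * Matrix.single i j c * diagProj S
      = if i ∈ S ∧ j ∈ S then Matrix.single i j c else 0 := by
  ext p q
  rw [compress_apply]
  simp only [Matrix.single, Matrix.of_apply]
  by_cases h : i ∈ S ∧ j ∈ S <;> simp only [h, if_true, if_false, Matrix.of_apply,
    Matrix.zero_apply] <;> split_ifs <;> simp_all <;> rw [if_neg (by tauto)]

lemma diagProj_mul_self (S : Finset ι) : diagProj S * diagProj S = diagProj S := by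
  rw [diagProj_eq_diagonal, Matrix.diagonal_mul_diagonal]
  exact congrArg Matrix.diagonal (funext fun i => by by_cases h : i ∈ S <;> simp [h])

lemma diagProj_star (S : Finset ι) : star (diagProj S) = diagProj S := by
  rw [diagProj_eq_diagonal]
  show (Matrix.diagonal _)ᴴ = _
  rw [Matrix.diagonal_conjTranspose]
  exact congrArg Matrix.diagonal (funext fun i => by
    by_cases h : i ∈ S <;> simp [h, Pi.star_apply])

omit [Fintype ι] in
lemma star_stdBasis (i j : ι) :
    star (Matrix.single i j (1:ℂ)) = Matrix.single j i 1 := by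
  ext p q
  show (Matrix.single i j (1:ℂ))ᴴ p q = _
  simp only [Matrix.conjTranspose_apply, Matrix.single, Matrix.of_apply]
  by_cases h : j = p ∧ i = q
  · rw [if_pos ⟨h.2, h.1⟩, if_pos h]; simp
  · rw [if_neg (fun h' => h ⟨h'.2, h'.1⟩), if_neg h]; simp

lemma compress_eq_sum (S : Finset ι) (y : Matrix ι ι ℂ) :
    diagProj S * y * diagProj S
      = ∑ p ∈ S, ∑ q ∈ S, y p q • Matrix.single p q (1:ℂ) := by
  ext a b
  rw [compress_apply]
  simp only [Matrix.sum_apply, Matrix.smul_apply, Matrix.single, Matrix.of_apply,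
    smul_ite, smul_eq_mul, mul_one, mul_zero, ite_and]
  rw [Finset.sum_comm]
  simp only [mul_ite, mul_one, mul_zero, Finset.sum_ite_eq', Finset.sum_ite_eq]
  by_cases ha : a ∈ S <;> by_cases hb : b ∈ S <;> simp [ha, hb]

lemma compress_compress (S : Finset ι) (x : Matrix ι ι ℂ) :
    diagProj S * (diagProj S * x * diagProj S) * diagProj S = diagProj S * x * diagProj S := by
  calc diagProj S * (diagProj S * x * diagProj S) * diagProj S
      = (diagProj S * diagProj S) * x * (diagProj S * diagProj S) := by
        simp only [mul_assoc]
    _ = _ := by rw [diagProj_mul_self]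

lemma corner_left (S : Finset ι) (x : Matrix ι ι ℂ)
    (hx : diagProj S * x * diagProj S = x) : diagProj S * x = x := by
  conv_rhs => rw [← hx]
  calc diagProj S * x = diagProj S * (diagProj S * x * diagProj S) := by rw [hx]
    _ = (diagProj S * diagProj S) * x * diagProj S := by simp only [mul_assoc]
    _ = diagProj S * x * diagProj S := by rw [diagProj_mul_self]

lemma corner_right (S : Finset ι) (x : Matrix ι ι ℂ)
    (hx : diagProj S * x * diagProj S = x) : x * diagProj S = x := by
  conv_rhs => rw [← hx]
  calc x * diagProj S = (diagProj S * x * diagProj S) * diagProj S := by rw [hx]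
    _ = diagProj S * x * (diagProj S * diagProj S) := by simp only [mul_assoc]
    _ = diagProj S * x * diagProj S := by rw [diagProj_mul_self]

/-- The corner `P M P` as a non-unital star subalgebra. -/
noncomputable def cornerAlg (S : Finset ι) : NonUnitalStarSubalgebra ℂ (Matrix ι ι ℂ) where
  carrier := {x | diagProj S * x * diagProj S = x}
  add_mem' := by
    intro a b ha hb
    simp only [Set.mem_setOf_eq] at *
    rw [mul_add, add_mul, ha, hb]
  zero_mem' := by simp
  smul_mem' := by
    intro c a ha
    simp only [Set.mem_setOf_eq] at *
    rw [Matrix.mul_smul, Matrix.smul_mul, ha]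
  mul_mem' := by
    intro a b ha hb
    simp only [Set.mem_setOf_eq] at *
    calc diagProj S * (a * b) * diagProj S
        = (diagProj S * a) * (b * diagProj S) := by simp only [mul_assoc]
      _ = a * b := by rw [corner_left S a ha, corner_right S b hb]
  star_mem' := by
    intro a ha
    simp only [Set.mem_setOf_eq] at *
    conv_rhs => rw [← ha]
    rw [StarMul.star_mul, StarMul.star_mul, diagProj_star, ← mul_assoc]

end AuxLemmas

/-- Every diagonal projection `Q` of a digraph space decomposes as an orthogonal
sum `Q = Q₁ + ⋯ + Q_s` of `A(G)`-irreducible diagonal projections such that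
`Q a Q = Q₁ a Q₁ + ⋯ + Q_s a Q_s` for every `a ∈ A(G)`. -/
theorem diagProj_decomposes_into_irreducibles (n : ℕ)
    (E : Fin n → Fin n → Prop) (hE : Reflexive E)
    (Q : Finset (Fin n)) :
    ∃ (s : ℕ) (Qs : Fin s → Finset (Fin n)),
      (∀ i, IsIrreducibleProj E (Qs i)) ∧
      (∀ i j, i ≠ j → Disjoint (Qs i) (Qs j)) ∧
      (∀ i, Qs i ⊆ Q) ∧
      (diagProj Q = ∑ i, diagProj (Qs i)) ∧
      (∀ a ∈ digraphSpace E,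
        diagProj Q * a * diagProj Q = ∑ i, diagProj (Qs i) * a * diagProj (Qs i)) := by
  classical
  let r : {i // i ∈ Q} → {i // i ∈ Q} → Prop := fun a b => E a.1 b.1
  let st : Setoid {i // i ∈ Q} := Relation.EqvGen.setoid r
  haveI : DecidableEq (Quotient st) := Classical.decEq _
  set s := Fintype.card (Quotient st) with hs
  let e : Quotient st ≃ Fin s := Fintype.equivFin _
  let Qs : Fin s → Finset (Fin n) :=
    fun k => (Q.attach.filter (fun a => e (Quotient.mk'' a) = k)).image Subtype.val
  have hmem : ∀ (i : Fin n) (k : Fin s),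
      i ∈ Qs k ↔ ∃ h : i ∈ Q, e (Quotient.mk'' (⟨i, h⟩ : {i // i ∈ Q})) = k := by
    intro i k
    constructor
    · intro hi
      obtain ⟨a, ha, rfl⟩ := Finset.mem_image.mp hi
      exact ⟨a.2, (Finset.mem_filter.mp ha).2⟩
    · rintro ⟨h, hk⟩
      exact Finset.mem_image.mpr ⟨⟨i, h⟩, Finset.mem_filter.mpr ⟨Finset.mem_attach _ _, hk⟩, rfl⟩
  have hsub : ∀ k, Qs k ⊆ Q := by
    intro k i hi
    obtain ⟨h, -⟩ := (hmem i k).mp hi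
    exact h
  have hclass : ∀ (a b : {i // i ∈ Q}), Relation.EqvGen r a b →
      (Quotient.mk'' a : Quotient st) = Quotient.mk'' b := fun a b h => Quotient.sound' h
  -- the key adjoin lemma
  have hadj : ∀ (k : Fin s) (a b : {i // i ∈ Q}), Relation.EqvGen r a b →
      e (Quotient.mk'' a) = k →
      Matrix.single a.1 b.1 (1:ℂ) ∈ NonUnitalStarAlgebra.adjoin ℂ
        ((fun x => diagProj (Qs k) * x * diagProj (Qs k)) ''
          (digraphSpace E : Set (Matrix (Fin n) (Fin n) ℂ))) := by
    intro k a b h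
    induction h with
    | rel x y hxy =>
      intro hk
      have hky : e (Quotient.mk'' y) = k :=
        (congrArg e (hclass x y (Relation.EqvGen.rel x y hxy))).symm.trans hk
      have hx : x.1 ∈ Qs k := (hmem _ _).mpr ⟨x.2, hk⟩
      have hy : y.1 ∈ Qs k := (hmem _ _).mpr ⟨y.2, hky⟩
      have heq : diagProj (Qs k) * Matrix.single x.1 y.1 1 * diagProj (Qs k)
          = Matrix.single x.1 y.1 1 := by
        rw [compress_stdBasis, if_pos ⟨hx, hy⟩]
      rw [← heq]
      exact NonUnitalStarAlgebra.subset_adjoin ℂ _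
        ⟨_, Submodule.subset_span ⟨x.1, y.1, hxy, rfl⟩, rfl⟩
    | refl x =>
      intro hk
      have hx : x.1 ∈ Qs k := (hmem _ _).mpr ⟨x.2, hk⟩
      have heq : diagProj (Qs k) * Matrix.single x.1 x.1 1 * diagProj (Qs k)
          = Matrix.single x.1 x.1 1 := by
        rw [compress_stdBasis, if_pos ⟨hx, hx⟩]
      rw [← heq]
      exact NonUnitalStarAlgebra.subset_adjoin ℂ _
        ⟨_, Submodule.subset_span ⟨x.1, x.1, hE x.1, rfl⟩, rfl⟩
    | symm x y hxy ih =>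
      intro hk
      have hkx : e (Quotient.mk'' x) = k := (congrArg e (hclass x y hxy)).trans hk
      have h1 := ih hkx
      rw [← star_stdBasis]
      exact star_mem h1
    | trans x y z h1 h2 ih1 ih2 =>
      intro hk
      have hky : e (Quotient.mk'' y) = k := (congrArg e (hclass x y h1)).symm.trans hk
      have heq : Matrix.single x.1 y.1 (1:ℂ) * Matrix.single y.1 z.1 1
          = Matrix.single x.1 z.1 1 := by
        rw [Matrix.single_mul_single_same, one_mul]
      rw [← heq]
      exact mul_mem (ih1 hk) (ih2 hky)
  -- irreducibility of each class
  have hirr : ∀ k, IsIrreducibleProj E (Qs k) := by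
    intro k
    unfold IsIrreducibleProj
    apply Set.Subset.antisymm
    · intro x hx
      refine ⟨x, Set.mem_univ x, ?_⟩
      have hle : NonUnitalStarAlgebra.adjoin ℂ
          ((fun a => diagProj (Qs k) * a * diagProj (Qs k)) ''
            (digraphSpace E : Set (Matrix (Fin n) (Fin n) ℂ))) ≤ cornerAlg (Qs k) := by
        apply NonUnitalStarAlgebra.adjoin_le
        rintro _ ⟨a, -, rfl⟩
        exact compress_compress (Qs k) a
      exact hle hx
    · rintro x ⟨y, -, rfl⟩
      show diagProj (Qs k) * y * diagProj (Qs k) ∈ NonUnitalStarAlgebra.adjoin ℂ _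
      rw [compress_eq_sum]
      refine sum_mem fun p hp => sum_mem fun q hq => SMulMemClass.smul_mem _ ?_
      obtain ⟨hpQ, hpk⟩ := (hmem p k).mp hp
      obtain ⟨hqQ, hqk⟩ := (hmem q k).mp hq
      exact hadj k ⟨p, hpQ⟩ ⟨q, hqQ⟩
        (Quotient.exact' (e.injective (hpk.trans hqk.symm))) hpk
  -- disjointness
  have hdisj : ∀ i j, i ≠ j → Disjoint (Qs i) (Qs j) := by
    intro i j hij
    rw [Finset.disjoint_left]
    intro a ha hb
    obtain ⟨h1, hk1⟩ := (hmem a i).mp ha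
    obtain ⟨h2, hk2⟩ := (hmem a j).mp hb
    exact hij (hk1.symm.trans hk2)
  -- the partition sum
  have hsum : diagProj Q = ∑ k, diagProj (Qs k) := by
    simp only [diagProj]
    rw [← Finset.sum_attach Q (fun i => Matrix.single i i (1:ℂ)),
      ← Finset.sum_fiberwise Q.attach (fun a => e (Quotient.mk'' a))
        (fun a => Matrix.single a.1 a.1 (1:ℂ))]
    refine Finset.sum_congr rfl fun k _ => ?_
    rw [Finset.sum_image (fun x _ y _ h => Subtype.ext h)]
  -- the compression identity
  have hcomp : ∀ a ∈ digraphSpace E,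
      diagProj Q * a * diagProj Q = ∑ k, diagProj (Qs k) * a * diagProj (Qs k) := by
    intro a ha
    have ha' : a ∈ Submodule.span ℂ
        {A : Matrix (Fin n) (Fin n) ℂ | ∃ i j, E i j ∧ A = Matrix.single i j 1} := ha
    clear ha
    induction ha' using Submodule.span_induction with
    | mem x hx =>
      obtain ⟨i, j, hij, rfl⟩ := hx
      rw [compress_stdBasis]
      by_cases hij' : i ∈ Q ∧ j ∈ Q
      · rw [if_pos hij']
        obtain ⟨hi, hj⟩ := hij'
        have hjk : e (Quotient.mk'' (⟨j, hj⟩ : {i // i ∈ Q}))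
            = e (Quotient.mk'' (⟨i, hi⟩ : {i // i ∈ Q})) :=
          (congrArg e (hclass ⟨i, hi⟩ ⟨j, hj⟩ (Relation.EqvGen.rel _ _ hij))).symm
        rw [Finset.sum_eq_single (e (Quotient.mk'' (⟨i, hi⟩ : {i // i ∈ Q})))]
        · rw [compress_stdBasis,
            if_pos ⟨(hmem i _).mpr ⟨hi, rfl⟩, (hmem j _).mpr ⟨hj, hjk⟩⟩]
        · intro k _ hk
          rw [compress_stdBasis, if_neg]
          rintro ⟨h1, h2⟩
          obtain ⟨h1Q, h1k⟩ := (hmem i k).mp h1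
          exact hk h1k.symm
        · intro h
          exact absurd (Finset.mem_univ _) h
      · rw [if_neg hij']
        symm
        apply Finset.sum_eq_zero
        intro k _
        rw [compress_stdBasis, if_neg]
        rintro ⟨h1, h2⟩
        exact hij' ⟨hsub k h1, hsub k h2⟩
    | zero => simp
    | add x y hx hy ihx ihy =>
      rw [mul_add, add_mul, ihx, ihy, ← Finset.sum_add_distrib]
      refine Finset.sum_congr rfl fun k _ => ?_
      rw [mul_add, add_mul]
    | smul c x hx ihx =>
      rw [Matrix.mul_smul, Matrix.smul_mul, ihx, Finset.smul_sum]
      refine Finset.sum_congr rfl fun k _ => ?_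
      rw [Matrix.mul_smul, Matrix.smul_mul]
  exact ⟨s, Qs, hirr, hdisj, hsub, hsum, hcomp⟩
end
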